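/- arXiv:2504.15828 — 2 statements merged into one kernel-verified Lean document; each statement's English description precedes it below -/
import Mathlib

section
/- Let w be a primitive word, n ≥ 1, and p a proper prefix of w. If w^n · p is such that (w^n p)·(w^n p) is a prefix of w^{2n+2}, then p is the empty word. -/
/-- The morphism on words induced by a map on letters. -/
def applyM {A B : Type*} (f : A → List B) (w : List A) : List B := (w.map f).flatten

/-- `wpow u n` is the word `u` repeated `n` times. -/
def wpow {A : Type*} (u : List A) (n : ℕ) : List A := (List.replicate n u).flatten

/-- A word is primitive if it is nonempty and not a proper power. -/
def Primitive {A : Type*} (w : List A) : Prop := w ≠ [] ∧ ∀ u n, w = wpow u n → n = 1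

/-- Conjugacy of words. -/
def Conj {A : Type*} (u v : List A) : Prop := ∃ x y, u = x ++ y ∧ v = y ++ x

/-- The language of a D(F)0L system with (iterated) morphism `g` and axiom set `W`:
all factors of all `g^[n] w`, `w ∈ W`. -/
def LangG {A : Type*} (g : List A → List A) (W : Set (List A)) : Set (List A) :=
  {u | ∃ n : ℕ, ∃ w ∈ W, u <:+: g^[n] w}

/-- `(s, w, t)` is an interpretation of `u`: `w` is in the language and `g w = s ++ u ++ t`. -/
def Interp {A : Type*} (g : List A → List A) (L : Set (List A)) (s w t u : List A) : Prop :=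
  w ∈ L ∧ g w = s ++ u ++ t

/-- The pair `(u₁, u₂)` is compatible with the interpretation `(s, w, t)` of `u₁ ++ u₂`. -/
def Compatible {A : Type*} (g : List A → List A) (s w t u₁ u₂ : List A) : Prop :=
  ∃ w₁ w₂, w = w₁ ++ w₂ ∧ g w₁ = s ++ u₁ ∧ g w₂ = u₂ ++ t

/-- Weakly synchronizing pair: compatible with all interpretations of `u₁ ++ u₂`. -/
def WeakSync {A : Type*} (g : List A → List A) (L : Set (List A)) (u₁ u₂ : List A) : Prop :=
  ∀ s w t, Interp g L s w t (u₁ ++ u₂) → Compatible g s w t u₁ u₂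

/-- Strongly synchronizing pair. -/
def StrongSync {A : Type*} (g : List A → List A) (L : Set (List A)) (u₁ u₂ : List A) : Prop :=
  u₁ ≠ [] ∧ ∃ a : A, ∀ s w t, Interp g L s w t (u₁ ++ u₂) →
    ∃ w₁ w₂, w = w₁ ++ w₂ ∧ g w₁ = s ++ u₁ ∧ g w₂ = u₂ ++ t ∧ w₁.getLast? = some a

/-- A word is weakly synchronized if some factorization of it is weakly synchronizing. -/
def WeaklySynchronized {A : Type*} (g : List A → List A) (L : Set (List A)) (u : List A) : Prop :=
  ∃ u₁ u₂, u = u₁ ++ u₂ ∧ WeakSync g L u₁ u₂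

/-- An admissible pair: compatible with at least one interpretation. -/
def Admissible {A : Type*} (g : List A → List A) (L : Set (List A)) (u₁ u₂ : List A) : Prop :=
  ∃ s w t, Interp g L s w t (u₁ ++ u₂) ∧ Compatible g s w t u₁ u₂

/-- A word is bounded if the lengths of its iterated images stay bounded. -/
def BoundedWord {A : Type*} (f : A → List A) (w : List A) : Prop :=
  ∃ C, ∀ k : ℕ, ((applyM f)^[k] w).length ≤ C

/-- `Ω(S)`: primitive words all of whose powers belong to the language. -/
def Omega {A : Type*} (f : A → List A) (W : Set (List A)) : Set (List A) :=
  {v | v ∈ LangG (applyM f) W ∧ Primitive v ∧ ∀ k : ℕ, wpow v k ∈ LangG (applyM f) W}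

/-- Minimal interpretation: `|s| < |f(first letter of w)|` and `|t| < |f(last letter of w)|`. -/
def MinInterp {A : Type*} (f : A → List A) (L : Set (List A)) (s w t u : List A) : Prop :=
  Interp (applyM f) L s w t u ∧ w ≠ [] ∧
    (∀ a, w.head? = some a → s.length < (f a).length) ∧
    (∀ b, w.getLast? = some b → t.length < (f b).length)


lemma wpow_add {A : Type*} (u : List A) (a b : ℕ) :
    wpow u (a + b) = wpow u a ++ wpow u b := by
  rw [wpow, wpow, wpow, List.replicate_add, List.flatten_append]

lemma wpow_one {A : Type*} (u : List A) : wpow u 1 = u := by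
  simp [wpow]

lemma wpow_nil {A : Type*} (u : List A) {n : ℕ} (h : wpow u n = []) (hu : u ≠ []) : n = 0 := by
  cases n with
  | zero => rfl
  | succ m =>
    rw [show m + 1 = 1 + m by omega, wpow_add, wpow_one] at h
    exact absurd (List.append_eq_nil_iff.1 h).1 hu

lemma comm_pow {A : Type*} : ∀ N (x y : List A), x.length + y.length ≤ N →
    x ++ y = y ++ x → ∃ z i j, x = wpow z i ∧ y = wpow z j := by
  intro N
  induction N with
  | zero =>
    intro x y hlen _
    have hx : x = [] := List.eq_nil_of_length_eq_zero (by omega)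
    have hy : y = [] := List.eq_nil_of_length_eq_zero (by omega)
    exact ⟨[], 0, 0, by simp [hx, hy, wpow]⟩
  | succ N ih =>
    intro x y hlen hcomm
    rcases eq_or_ne x [] with rfl | hx
    · exact ⟨y, 0, 1, by simp [wpow], (wpow_one y).symm⟩
    rcases eq_or_ne y [] with rfl | hy
    · exact ⟨x, 1, 0, (wpow_one x).symm, by simp [wpow]⟩
    rcases le_total x.length y.length with hle | hle
    · have hxy : x <+: y := by
        refine List.prefix_of_prefix_length_le ?_ (List.prefix_append y x) hle
        rw [← hcomm]; exact List.prefix_append x y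
      obtain ⟨y', rfl⟩ := hxy
      have hcomm' : x ++ y' = y' ++ x := by
        have : x ++ (x ++ y') = x ++ (y' ++ x) := by
          rw [hcomm]; simp [List.append_assoc]
        exact List.append_cancel_left this
      have hxlen : 1 ≤ x.length := by
        cases x with
        | nil => exact absurd rfl hx
        | cons a l => simp
      obtain ⟨z, i, j, h1, h2⟩ := ih x y' (by simp at hlen ⊢; omega) hcomm'
      exact ⟨z, i, i + j, h1, by rw [wpow_add, h1, h2]⟩
    · have hyx : y <+: x := by
        refine List.prefix_of_prefix_length_le ?_ (List.prefix_append x y) hle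
        rw [hcomm]; exact List.prefix_append y x
      obtain ⟨x', rfl⟩ := hyx
      have hcomm' : y ++ x' = x' ++ y := by
        have : y ++ (y ++ x') = y ++ (x' ++ y) := by
          rw [← hcomm]; simp [List.append_assoc]
        exact List.append_cancel_left this
      have hylen : 1 ≤ y.length := by
        cases y with
        | nil => exact absurd rfl hy
        | cons a l => simp
      obtain ⟨z, i, j, h1, h2⟩ := ih y x' (by simp at hlen ⊢; omega) hcomm'
      exact ⟨z, i + j, i, by rw [wpow_add, h1, h2], h1⟩

theorem stmt3 {A : Type*} (w p : List A) (n : ℕ) (hn : 1 ≤ n)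
    (hw : Primitive w) (hp : p <+: w) (hlen : p.length < w.length)
    (h : (wpow w n ++ p) ++ (wpow w n ++ p) <+: wpow w (2 * n + 2)) :
    p = [] := by
  by_contra hne
  obtain ⟨u, hu⟩ := hp
  have hune : u ≠ [] := by
    intro h0
    rw [h0, List.append_nil] at hu
    rw [hu] at hlen
    omega
  -- step 1: p ++ w <+: wpow w (n+2)
  have h1 : p ++ (wpow w n ++ p) <+: wpow w (n + 2) := by
    have e : wpow w (2 * n + 2) = wpow w n ++ wpow w (n + 2) := by
      rw [← wpow_add]; ring_nf
    rw [e] at h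
    have h' : wpow w n ++ (p ++ (wpow w n ++ p)) <+: wpow w n ++ wpow w (n + 2) := by
      simpa [List.append_assoc] using h
    exact (List.prefix_append_right_inj _).1 h'
  have h2 : p ++ w <+: wpow w (n + 2) := by
    refine List.IsPrefix.trans ?_ h1
    have : w <+: wpow w n ++ p := by
      obtain ⟨m, rfl⟩ := Nat.exists_eq_add_of_le hn
      rw [wpow_add, wpow_one, List.append_assoc]
      exact List.prefix_append w _
    exact (List.prefix_append_right_inj p).2 this
  have h3 : w ++ w <+: wpow w (n + 2) := by
    have e : wpow w (n + 2) = (w ++ w) ++ wpow w n := by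
      rw [show n + 2 = 1 + 1 + n by ring, wpow_add, wpow_add, wpow_one, List.append_assoc]
    rw [e]; exact List.prefix_append _ _
  have h4 : p ++ w <+: w ++ w :=
    List.prefix_of_prefix_length_le h2 h3 (by simp; omega)
  -- step 2: p ++ u = u ++ p
  have h6 : p ++ u <+: u ++ (p ++ u) := by
    have h4' : p ++ (p ++ u) <+: p ++ (u ++ (p ++ u)) := by
      rw [← hu] at h4
      simpa only [List.append_assoc] using h4
    exact (List.prefix_append_right_inj p).1 h4'
  have h7 : p ++ u = u ++ p := by
    have h8 : u ++ p <+: u ++ (p ++ u) := by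
      simpa only [List.append_assoc] using List.prefix_append (u ++ p) u
    exact (List.prefix_of_prefix_length_le h6 h8 (by simp; omega)).eq_of_length
      (by simp; omega)
  obtain ⟨z, i, j, hpz, huz⟩ := comm_pow (p.length + u.length) p u le_rfl h7
  have hw2 : w = wpow z (i + j) := by rw [← hu, wpow_add, hpz, huz]
  have := hw.2 z (i + j) hw2
  have hi : i ≠ 0 := by
    rintro rfl
    exact hne (by simpa [wpow] using hpz)
  have hj : j ≠ 0 := by
    rintro rfl
    exact hune (by simpa [wpow] using huz)
  omega
end

section
/- Let S = (A, φ, W) be a DF0L system that is strongly circular with threshold D_s. Then S is weakly circular with weak circularity threshold D_w ≤ 2·D_s + max_{c∈A} |φ(c)|. -/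
/-!
Cut the image `φ(w) = s u t` of an interpretation of `u` just after the first letter of `w`
whose image ends more than `|s| + D_s` letters into `φ(w)`. Since a letter has an image of
length at most `⌈φ⌉`, the cut lies at most `|s| + D_s + ⌈φ⌉` letters in, so when
`|u| > 2 D_s + ⌈φ⌉` it splits `u` into an admissible pair whose both halves are longer than
`D_s`. That pair is strongly, hence weakly, synchronizing. A word without interpretations is
weakly synchronized by the trivial factorization `(u, ε)`.
-/

section Words

variable {A B : Type*}

theorem applyM_append (f : A → List B) (x y : List A) :
    applyM f (x ++ y) = applyM f x ++ applyM f y := by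
  simp [applyM]

theorem applyM_cons (f : A → List B) (c : A) (x : List A) :
    applyM f (c :: x) = f c ++ applyM f x := by
  simp [applyM]

theorem exists_length_applyM_take_mem_Ioc (f : A → List B) {M : ℕ}
    (hM : ∀ c, (f c).length ≤ M) (w : List A) {n : ℕ} (hn : n < (applyM f w).length) :
    ∃ i, n < (applyM f (w.take i)).length ∧ (applyM f (w.take i)).length ≤ n + M := by
  induction w generalizing n with
  | nil => simp [applyM] at hn
  | cons c w ih =>
    rw [applyM_cons, List.length_append] at hn
    by_cases hc : n < (f c).length
    · have hone : applyM f ((c :: w).take 1) = f c := by simp [applyM]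
      exact ⟨1, hone ▸ hc, hone ▸ (hM c).trans (Nat.le_add_left M n)⟩
    · obtain ⟨i, hi₁, hi₂⟩ := ih (n := n - (f c).length) (by omega)
      refine ⟨i + 1, ?_, ?_⟩ <;>
        simp only [List.take_succ_cons, applyM_cons, List.length_append] <;> omega

end Words

theorem List.eq_append_take_drop_of_append_eq {A : Type*} {x y s u t : List A} {p : ℕ}
    (h : x ++ y = s ++ u ++ t) (hx : x.length = s.length + p) (hp : p ≤ u.length) :
    x = s ++ u.take p ∧ y = u.drop p ++ t := by
  have hx' : x = (s ++ u ++ t).take x.length := by rw [← h, List.take_left' rfl]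
  have hy' : y = (s ++ u ++ t).drop x.length := by rw [← h, List.drop_left' rfl]
  rw [hx] at hx' hy'
  rw [List.append_assoc, List.take_length_add_append, List.take_append_of_le_length hp] at hx'
  rw [List.append_assoc, List.drop_length_add_append, List.drop_append_of_le_length hp] at hy'
  exact ⟨hx', hy'⟩

section Synchronization

variable {A : Type*} (g : List A → List A) (L : Set (List A))

theorem StrongSync.weakSync {u₁ u₂ : List A} (h : StrongSync g L u₁ u₂) :
    WeakSync g L u₁ u₂ := by
  obtain ⟨-, a, hsync⟩ := h
  intro s w t hint
  obtain ⟨w₁, w₂, hw, h₁, h₂, -⟩ := hsync s w t hint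
  exact ⟨w₁, w₂, hw, h₁, h₂⟩

theorem weaklySynchronized_of_forall_not_interp {u : List A}
    (h : ∀ s w t, ¬ Interp g L s w t u) : WeaklySynchronized g L u :=
  ⟨u, [], (List.append_nil u).symm, fun s w t hint => (h s w t (by simpa using hint)).elim⟩

end Synchronization

theorem exists_admissible_split_of_interp {A : Type*} (f : A → List A) (L : Set (List A))
    {M : ℕ} (hM : ∀ c, (f c).length ≤ M) (D : ℕ) {s w t u : List A}
    (hint : Interp (applyM f) L s w t u) (hu : 2 * D + M < u.length) :
    ∃ u₁ u₂, u = u₁ ++ u₂ ∧ Admissible (applyM f) L u₁ u₂ ∧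
      D < u₁.length ∧ D < u₂.length := by
  have hgw := hint.2
  have hlen := congrArg List.length hgw
  simp only [List.length_append] at hlen
  obtain ⟨i, hi₁, hi₂⟩ :=
    exists_length_applyM_take_mem_Ioc f hM w (n := s.length + D) (by omega)
  set p := (applyM f (w.take i)).length - s.length
  have hsplit : applyM f (w.take i) ++ applyM f (w.drop i) = s ++ u ++ t := by
    rw [← applyM_append, List.take_append_drop, hgw]
  obtain ⟨h₁, h₂⟩ := List.eq_append_take_drop_of_append_eq hsplit (p := p) (by omega) (by omega)
  have hint' : Interp (applyM f) L s w t (u.take p ++ u.drop p) := by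
    rwa [List.take_append_drop]
  refine ⟨u.take p, u.drop p, (List.take_append_drop p u).symm,
    ⟨s, w, t, hint', w.take i, w.drop i, (List.take_append_drop i w).symm, h₁, h₂⟩, ?_, ?_⟩
  · rw [List.length_take]; omega
  · rw [List.length_drop]; omega

theorem stmt9_general {A : Type*} [Fintype A] (f : A → List A)
    (W : Set (List A))
    (Ds : ℕ)
    (hstrong : ∀ u₁ u₂ : List A,
      Admissible (applyM f) (LangG (applyM f) W) u₁ u₂ →
      Ds < u₁.length → Ds < u₂.length →
      StrongSync (applyM f) (LangG (applyM f) W) u₁ u₂) :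
    ∀ u ∈ LangG (applyM f) W,
      2 * Ds + (Finset.univ.sup fun c : A => (f c).length) < u.length →
      WeaklySynchronized (applyM f) (LangG (applyM f) W) u := by
  intro u _ hlen
  by_cases hI : ∃ s w t, Interp (applyM f) (LangG (applyM f) W) s w t u
  · obtain ⟨s, w, t, hint⟩ := hI
    have hM : ∀ c, (f c).length ≤ Finset.univ.sup fun c : A => (f c).length :=
      fun c => Finset.le_sup (f := fun c : A => (f c).length) (Finset.mem_univ c)
    obtain ⟨u₁, u₂, rfl, hadm, h₁, h₂⟩ := exists_admissible_split_of_interp f _ hM Ds hint hlen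
    exact ⟨u₁, u₂, rfl, (hstrong u₁ u₂ hadm h₁ h₂).weakSync⟩
  · exact weaklySynchronized_of_forall_not_interp _ _ fun s w t hint => hI ⟨s, w, t, hint⟩

theorem stmt9 {A : Type*} [Fintype A] (f : A → List A)
    (W : Set (List A)) (hWfin : W.Finite) (hWne : W.Nonempty)
    (hax : ∀ w ∈ W, w ≠ [])
    (Ds : ℕ)
    (hstrong : ∀ u₁ u₂ : List A,
      Admissible (applyM f) (LangG (applyM f) W) u₁ u₂ →
      Ds < u₁.length → Ds < u₂.length →
      StrongSync (applyM f) (LangG (applyM f) W) u₁ u₂) :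
    ∀ u ∈ LangG (applyM f) W,
      2 * Ds + (Finset.univ.sup fun c : A => (f c).length) < u.length →
      WeaklySynchronized (applyM f) (LangG (applyM f) W) u :=
  stmt9_general f W Ds hstrong
end
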